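/- arXiv:1911.12294 — 3 statements merged into one kernel-verified Lean document; each statement's English description precedes it below -/
import Mathlib

section
/- Let 0 < α < π. The function h(x) = sin((π−α)x)/sin(πx) is strictly increasing on (0,1/2]: for all 0 < x₁ < x₂ ≤ 1/2, h(x₁) < h(x₂). Moreover h(x) → 1 − α/π as x → 0⁺ and h(1/2) = sin((π−α)/2). -/
/-!
Write `h(x) = sin(bx)/sin(ax)` with `0 < b < a` (here `a = π`, `b = π - α`). The numerator of
`h'` is `g(x) = b cos(bx) sin(ax) - a cos(ax) sin(bx)`, whose derivative
`(a² - b²) sin(bx) sin(ax)` is positive on `(0, π/a)`; since `g(0) = 0`, `g` and hence `h'` are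
positive there. The limit at `0` follows from `sin(cx) = cx · sinc(cx)` and continuity of `sinc`.
-/

open Filter Topology Real Set

namespace Real

lemma sin_eq_mul_sinc (x : ℝ) : sin x = x * sinc x := by
  rcases eq_or_ne x 0 with rfl | hx
  · simp
  · rw [sinc_of_ne_zero hx, mul_div_cancel₀ _ hx]

lemma hasDerivAt_sin_mul (c x : ℝ) :
    HasDerivAt (fun x => sin (c * x)) (c * cos (c * x)) x := by
  simpa [mul_comm] using ((hasDerivAt_id x).const_mul c).sin

lemma hasDerivAt_cos_mul (c x : ℝ) :
    HasDerivAt (fun x => cos (c * x)) (-(c * sin (c * x))) x := by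
  simpa [mul_comm] using ((hasDerivAt_id x).const_mul c).cos

lemma tendsto_sin_mul_div_sin_mul {a : ℝ} (ha : a ≠ 0) (b : ℝ) :
    Tendsto (fun x => sin (b * x) / sin (a * x)) (𝓝[≠] 0) (𝓝 (b / a)) := by
  have hcont : ContinuousAt (fun x => b * sinc (b * x) / (a * sinc (a * x))) 0 :=
    ContinuousAt.div (by fun_prop) (by fun_prop) (by simpa using ha)
  have hlim := hcont.tendsto.mono_left (nhdsWithin_le_nhds (s := {0}ᶜ))
  simp only [mul_zero, sinc_zero, mul_one] at hlim
  refine hlim.congr' ?_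
  filter_upwards [self_mem_nhdsWithin] with x (hx : x ≠ 0)
  rw [sin_eq_mul_sinc (b * x), sin_eq_mul_sinc (a * x), mul_right_comm b x, mul_right_comm a x,
    mul_div_mul_right _ _ hx]

section StrictMono

variable {a b : ℝ}

lemma sin_mul_pos_of_mem_Ioo (hb : 0 < b) (hba : b ≤ a) {x : ℝ} (hx : x ∈ Ioo 0 (π / a)) :
    0 < sin (b * x) := by
  have ha : 0 < a := hb.trans_le hba
  have hxa : a * x < π := (lt_div_iff₀' ha).mp hx.2
  exact sin_pos_of_pos_of_lt_pi (mul_pos hb hx.1) (by nlinarith [hx.1])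

/-- The numerator of the derivative of `x ↦ sin (b * x) / sin (a * x)`. -/
noncomputable def sinQuotientDerivNum (a b x : ℝ) : ℝ :=
  b * cos (b * x) * sin (a * x) - a * cos (a * x) * sin (b * x)

lemma hasDerivAt_sinQuotientDerivNum (a b x : ℝ) :
    HasDerivAt (sinQuotientDerivNum a b) ((a ^ 2 - b ^ 2) * (sin (b * x) * sin (a * x))) x := by
  have hb := ((hasDerivAt_cos_mul b x).const_mul b).mul (hasDerivAt_sin_mul a x)
  have ha := ((hasDerivAt_cos_mul a x).const_mul a).mul (hasDerivAt_sin_mul b x)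
  exact (hb.sub ha).congr_deriv (by ring)

lemma sinQuotientDerivNum_pos (hb : 0 < b) (hba : b < a) {x : ℝ} (hx : x ∈ Ioo 0 (π / a)) :
    0 < sinQuotientDerivNum a b x := by
  have hmono : StrictMonoOn (sinQuotientDerivNum a b) (Icc 0 (π / a)) := by
    refine strictMonoOn_of_deriv_pos (convex_Icc _ _)
      (fun y _ => (hasDerivAt_sinQuotientDerivNum a b y).continuousAt.continuousWithinAt) ?_
    intro y hy
    rw [interior_Icc] at hy
    rw [(hasDerivAt_sinQuotientDerivNum a b y).deriv]
    have hab : b ^ 2 < a ^ 2 := by nlinarith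
    exact mul_pos (by linarith) (mul_pos (sin_mul_pos_of_mem_Ioo hb hba.le hy)
      (sin_mul_pos_of_mem_Ioo (hb.trans hba) le_rfl hy))
  have h0 : sinQuotientDerivNum a b 0 = 0 := by simp [sinQuotientDerivNum]
  simpa [h0] using
    hmono (left_mem_Icc.mpr (div_pos pi_pos (hb.trans hba)).le) (Ioo_subset_Icc_self hx) hx.1

lemma hasDerivAt_sin_mul_div_sin_mul {x : ℝ} (hx : sin (a * x) ≠ 0) :
    HasDerivAt (fun x => sin (b * x) / sin (a * x))
      (sinQuotientDerivNum a b x / sin (a * x) ^ 2) x :=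
  ((hasDerivAt_sin_mul b x).div (hasDerivAt_sin_mul a x) hx).congr_deriv
    (by rw [sinQuotientDerivNum]; ring)

theorem strictMonoOn_sin_mul_div_sin_mul (hb : 0 < b) (hba : b < a) :
    StrictMonoOn (fun x => sin (b * x) / sin (a * x)) (Ioo 0 (π / a)) := by
  have hsin : ∀ x ∈ Ioo 0 (π / a), 0 < sin (a * x) := fun x hx =>
    sin_mul_pos_of_mem_Ioo (hb.trans hba) le_rfl hx
  refine strictMonoOn_of_deriv_pos (convex_Ioo _ _) (fun x hx =>
    (hasDerivAt_sin_mul_div_sin_mul (hsin x hx).ne').continuousAt.continuousWithinAt) ?_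
  intro x hx
  rw [interior_Ioo] at hx
  rw [(hasDerivAt_sin_mul_div_sin_mul (hsin x hx).ne').deriv]
  exact div_pos (sinQuotientDerivNum_pos hb hba hx) (pow_pos (hsin x hx) 2)

end StrictMono

end Real

/-- For `0 < α < π`, the function `h(x) = sin((π−α)x)/sin(πx)` is strictly
increasing on `(0,1/2]`, tends to `1 − α/π` as `x → 0⁺`, and `h(1/2) = sin((π−α)/2)`. -/
theorem sin_quotient_strictMono (α : ℝ) (hα0 : 0 < α) (hαπ : α < Real.pi) :
    StrictMonoOn (fun x : ℝ => Real.sin ((Real.pi - α) * x) / Real.sin (Real.pi * x))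
      (Set.Ioc 0 (1 / 2)) ∧
    Tendsto (fun x : ℝ => Real.sin ((Real.pi - α) * x) / Real.sin (Real.pi * x))
      (nhdsWithin 0 (Set.Ioi 0)) (nhds (1 - α / Real.pi)) ∧
    Real.sin ((Real.pi - α) * (1 / 2)) / Real.sin (Real.pi * (1 / 2))
      = Real.sin ((Real.pi - α) / 2) := by
  refine ⟨?_, ?_, ?_⟩
  · have hmono := strictMonoOn_sin_mul_div_sin_mul (sub_pos.mpr hαπ) (sub_lt_self π hα0)
    rw [div_self pi_ne_zero] at hmono
    exact hmono.mono (Ioc_subset_Ioo_right (by norm_num))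
  · have hlim := (tendsto_sin_mul_div_sin_mul pi_ne_zero (π - α)).mono_left (nhdsGT_le_nhdsNE 0)
    rwa [sub_div, div_self pi_ne_zero] at hlim
  · rw [mul_one_div, mul_one_div, sin_pi_div_two, div_one]
end

section
/- Let 0 < α < π and let K̂_α(z) = sin((π−α)z)/sin(πz). Then K̂_α is injective on the open strip {z ∈ ℂ : −1/2 < Re z < 0} (note that sin(πz) ≠ 0 there, so K̂_α is well defined and holomorphic on this set). -/
/-!
`K̂_α = 1 / g` with `g z = sin (π z) / sin (b z)` and `b = π - α ∈ (0, π)`, so it suffices that `g`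
is injective on the convex strip, which follows from `Re g' > 0` there (Noshiro–Warschawski).
Now `g' = g · (π cot πz - b cot bz)`, and by conjugation symmetry we may take `Im z ≤ 0`. Then `g`
lies in the quadrant `Re > 0, Im ≤ 0`: by product-to-sum formulas this reduces to the monotonicity
of `sin x / x` on `[0, π]` and of `sinh x / x` on `[0, ∞)`. And `π cot πz - b cot bz` lies in the
quadrant `Re > 0, Im ≥ 0`, being the integral over `t ∈ [b, π]` of
`∂ₜ (t cot tz) = (u - sin u) / (1 - cos u)`, `u = -2tz`, a map sending the half-strip
`0 < Re u < π, Im u ≥ 0` into that quadrant by two elementary estimates in `sin, cos, sinh, cosh`.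
-/

open Real Set ComplexConjugate

lemma le_of_hasDerivAt_nonneg {f f' : ℝ → ℝ} {a b : ℝ} (hab : a ≤ b)
    (hf : ∀ x ∈ Icc a b, HasDerivAt f (f' x) x) (hf' : ∀ x ∈ Ioo a b, 0 ≤ f' x) : f a ≤ f b := by
  refine monotoneOn_of_hasDerivWithinAt_nonneg (f' := f') (convex_Icc a b)
    (fun x hx ↦ (hf x hx).continuousAt.continuousWithinAt) (fun x hx ↦ ?_) (fun x hx ↦ ?_)
    (left_mem_Icc.2 hab) (right_mem_Icc.2 hab) hab <;> rw [interior_Icc] at hx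
  · exact (hf x (Ioo_subset_Icc_self hx)).hasDerivWithinAt
  · exact hf' x hx

lemma lt_of_hasDerivAt_pos {f f' : ℝ → ℝ} {a b : ℝ} (hab : a < b)
    (hf : ∀ x ∈ Icc a b, HasDerivAt f (f' x) x) (hf' : ∀ x ∈ Ioo a b, 0 < f' x) : f a < f b := by
  refine strictMonoOn_of_hasDerivWithinAt_pos (f' := f') (convex_Icc a b)
    (fun x hx ↦ (hf x hx).continuousAt.continuousWithinAt) (fun x hx ↦ ?_) (fun x hx ↦ ?_)
    (left_mem_Icc.2 hab.le) (right_mem_Icc.2 hab.le) hab <;> rw [interior_Icc] at hx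
  · exact (hf x (Ioo_subset_Icc_self hx)).hasDerivWithinAt
  · exact hf' x hx

lemma ConvexOn.mul_map_mul_le {s : Set ℝ} {f : ℝ → ℝ} (hf : ConvexOn ℝ s f) (h0 : 0 ∈ s)
    (hf0 : f 0 = 0) {p q y : ℝ} (hp : 0 ≤ p) (hpq : p ≤ q) (hy : q * y ∈ s) :
    q * f (p * y) ≤ p * f (q * y) := by
  rcases (hp.trans hpq).eq_or_lt with rfl | hq
  · simp [le_antisymm hpq hp]
  have hconv := hf.2 h0 hy (sub_nonneg.2 ((div_le_one hq).2 hpq) : 0 ≤ 1 - p / q)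
    (div_nonneg hp hq.le) (by ring)
  rw [smul_zero, zero_add, hf0, smul_zero, zero_add, smul_eq_mul, smul_eq_mul,
    ← mul_assoc, div_mul_cancel₀ p hq.ne'] at hconv
  calc q * f (p * y) ≤ q * (p / q * f (q * y)) := mul_le_mul_of_nonneg_left hconv hq.le
    _ = p * f (q * y) := by field_simp

lemma ConcaveOn.mul_map_mul_le {s : Set ℝ} {f : ℝ → ℝ} (hf : ConcaveOn ℝ s f) (h0 : 0 ∈ s)
    (hf0 : f 0 = 0) {p q y : ℝ} (hp : 0 ≤ p) (hpq : p ≤ q) (hy : q * y ∈ s) :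
    p * f (q * y) ≤ q * f (p * y) := by
  simpa using hf.neg.mul_map_mul_le h0 (by simp [hf0]) hp hpq hy

namespace Real

lemma convexOn_sinh : ConvexOn ℝ (Ici 0) sinh := by
  refine MonotoneOn.convexOn_of_deriv (convex_Ici 0) continuous_sinh.continuousOn
    differentiable_sinh.differentiableOn ?_
  rw [deriv_sinh, interior_Ici]
  intro x hx y hy hxy
  rw [cosh_le_cosh, abs_of_pos hx, abs_of_pos hy]
  exact hxy

lemma sinh_le_mul_cosh {x : ℝ} (hx : 0 ≤ x) : sinh x ≤ x * cosh x := by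
  rcases hx.eq_or_lt with rfl | hx
  · simp
  have := convexOn_sinh.slope_le_of_hasDerivAt (mem_Ici.2 le_rfl) hx.le hx (hasDerivAt_sinh x)
  rwa [slope_def_field, sinh_zero, sub_zero, sub_zero, div_le_iff₀ hx, mul_comm] at this

lemma mul_cos_le_sin {x : ℝ} (h0 : 0 ≤ x) (hπ : x ≤ π) : x * cos x ≤ sin x := by
  rcases h0.eq_or_lt with rfl | h0
  · simp
  have := strictConcaveOn_sin_Icc.concaveOn.le_slope_of_hasDerivAt
    (left_mem_Icc.2 pi_pos.le) ⟨h0.le, hπ⟩ h0 (hasDerivAt_sin x)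
  rwa [slope_def_field, sin_zero, sub_zero, sub_zero, le_div_iff₀ h0, mul_comm] at this

lemma sin_mul_mul_sinh_mul_le {p q x y : ℝ} (hp : 0 < p) (hpq : p ≤ q) (hx : 0 ≤ x)
    (hqx : q * x ≤ π) (hy : 0 ≤ y) :
    sin (q * x) * sinh (p * y) ≤ sin (p * x) * sinh (q * y) := by
  have hq : 0 < q := hp.trans_le hpq
  have hsin : p * sin (q * x) ≤ q * sin (p * x) :=
    strictConcaveOn_sin_Icc.concaveOn.mul_map_mul_le (left_mem_Icc.2 pi_pos.le) sin_zero hp.le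
      hpq ⟨by positivity, hqx⟩
  have hsinh : q * sinh (p * y) ≤ p * sinh (q * y) :=
    convexOn_sinh.mul_map_mul_le (mem_Ici.2 le_rfl) sinh_zero hp.le hpq (mem_Ici.2 (by positivity))
  have hsin_nonneg : 0 ≤ sin (p * x) :=
    sin_nonneg_of_nonneg_of_le_pi (by positivity) ((mul_le_mul_of_nonneg_right hpq hx).trans hqx)
  have hsinh_nonneg : 0 ≤ sinh (p * y) := sinh_nonneg_iff.2 (by positivity)
  have := mul_le_mul hsin hsinh (mul_nonneg hq.le hsinh_nonneg) (mul_nonneg hq.le hsin_nonneg)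
  refine le_of_mul_le_mul_left ?_ (mul_pos hp hq)
  linarith

lemma mul_cos_mul_sinh_le {σ η : ℝ} (hσ0 : 0 ≤ σ) (hσπ : σ ≤ π) (hη : 0 ≤ η) :
    σ * cos σ * sinh η ≤ η * sin σ * cosh η := by
  calc σ * cos σ * sinh η ≤ sin σ * sinh η :=
        mul_le_mul_of_nonneg_right (mul_cos_le_sin hσ0 hσπ) (sinh_nonneg_iff.2 hη)
    _ ≤ sin σ * (η * cosh η) :=
        mul_le_mul_of_nonneg_left (sinh_le_mul_cosh hη) (sin_nonneg_of_nonneg_of_le_pi hσ0 hσπ)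
    _ = η * sin σ * cosh η := by ring

lemma sin_mul_cosh_sub_cos_lt {σ η : ℝ} (hσ0 : 0 < σ) (hσπ : σ < π) (hη : 0 ≤ η) :
    sin σ * (cosh η - cos σ) < σ * (1 - cos σ * cosh η) + η * sin σ * sinh η := by
  have hcos : cos σ < 1 := by
    simpa using cos_lt_cos_of_nonneg_of_le_pi le_rfl hσπ.le hσ0
  have hbase : sin σ * (1 - cos σ) < σ * (1 - cos σ) :=
    mul_lt_mul_of_pos_right (sin_lt hσ0) (sub_pos.2 hcos)
  have hmono := le_of_hasDerivAt_nonneg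
    (f := fun t ↦ σ * (1 - cos σ * cosh t) + t * sin σ * sinh t - sin σ * (cosh t - cos σ))
    (f' := fun t ↦ t * sin σ * cosh t - σ * cos σ * sinh t) hη
    (fun t _ ↦
      ((((((hasDerivAt_cosh t).const_mul (cos σ)).const_sub 1).const_mul σ).add
        ((hasDerivAt_mul_const (sin σ)).mul (hasDerivAt_sinh t))).sub
        (((hasDerivAt_cosh t).sub_const (cos σ)).const_mul (sin σ))).congr_deriv (by ring))
    (fun t ht ↦ sub_nonneg.2 (mul_cos_mul_sinh_le hσ0.le hσπ.le ht.1.le))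
  simp only [cosh_zero, sinh_zero, mul_one, mul_zero, zero_mul, add_zero] at hmono
  linarith

lemma cos_mul_sinh_add_mul_cosh_le {σ η : ℝ} (hσ0 : 0 ≤ σ) (hσπ : σ ≤ π) (hη : 0 ≤ η) :
    cos σ * (sinh η + η * cosh η) + σ * sin σ * sinh η ≤ η + sinh η * cosh η := by
  have hbase : 0 ≤ (sinh η - η) * (cosh η - 1) :=
    mul_nonneg (sub_nonneg.2 (self_le_sinh_iff.2 hη)) (sub_nonneg.2 (one_le_cosh η))
  have hmono := le_of_hasDerivAt_nonneg
    (f := fun t ↦ -(cos t * (sinh η + η * cosh η) + t * sin t * sinh η))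
    (f' := fun t ↦ η * sin t * cosh η - t * cos t * sinh η) hσ0
    (fun t _ ↦
      ((((hasDerivAt_cos t).mul_const (sinh η + η * cosh η)).add
        (((hasDerivAt_id' t).mul (hasDerivAt_sin t)).mul_const (sinh η))).neg).congr_deriv
          (by ring))
    (fun t ht ↦ sub_nonneg.2 (mul_cos_mul_sinh_le ht.1.le (ht.2.le.trans hσπ) hη))
  simp only [cos_zero, sin_zero, one_mul, mul_zero, zero_mul, add_zero] at hmono
  linarith

end Real

lemma HasDerivAt.complex_re {f : ℝ → ℂ} {f' : ℂ} {x : ℝ} (h : HasDerivAt f f' x) :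
    HasDerivAt (fun t ↦ (f t).re) f'.re x :=
  Complex.reCLM.hasFDerivAt.comp_hasDerivAt x h

lemma HasDerivAt.complex_im {f : ℝ → ℂ} {f' : ℂ} {x : ℝ} (h : HasDerivAt f f' x) :
    HasDerivAt (fun t ↦ (f t).im) f'.im x :=
  Complex.imCLM.hasFDerivAt.comp_hasDerivAt x h

theorem Convex.injOn_of_hasDerivAt_of_re_pos {s : Set ℂ} (hs : Convex ℝ s) {f f' : ℂ → ℂ}
    (hf : ∀ z ∈ s, HasDerivAt f (f' z) z) (hf' : ∀ z ∈ s, 0 < (f' z).re) : InjOn f s := by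
  intro z₁ h₁ z₂ h₂ heq
  by_contra hne
  have hd : z₂ - z₁ ≠ 0 := sub_ne_zero.2 (Ne.symm hne)
  have hseg : ∀ t ∈ Icc (0 : ℝ) 1, z₁ + t * (z₂ - z₁) ∈ s := fun t ht ↦ by
    simpa [Complex.real_smul] using hs.add_smul_sub_mem h₁ h₂ ht
  have hderiv : ∀ t ∈ Icc (0 : ℝ) 1, HasDerivAt (fun t : ℝ ↦ f (z₁ + t * (z₂ - z₁)) / (z₂ - z₁))
      (f' (z₁ + t * (z₂ - z₁))) t := fun t ht ↦ by
    have hline : HasDerivAt (fun u : ℂ ↦ z₁ + u * (z₂ - z₁)) (z₂ - z₁) t := by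
      simpa using ((hasDerivAt_id (t : ℂ)).mul_const (z₂ - z₁)).const_add z₁
    have := ((hf _ (hseg t ht)).comp (t : ℂ) hline).comp_ofReal.div_const (z₂ - z₁)
    rwa [mul_div_cancel_right₀ _ hd] at this
  have := lt_of_hasDerivAt_pos zero_lt_one (fun t ht ↦ (hderiv t ht).complex_re)
    (fun t ht ↦ hf' _ (hseg t (Ioo_subset_Icc_self ht)))
  simp [heq] at this

namespace Complex

lemma sin_re (z : ℂ) : (sin z).re = Real.sin z.re * Real.cosh z.im := by
  rw [sin_eq]; simp [sin_ofReal_re, cosh_ofReal_re]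

lemma sin_im (z : ℂ) : (sin z).im = Real.cos z.re * Real.sinh z.im := by
  rw [sin_eq]; simp [cos_ofReal_re, sinh_ofReal_re]

lemma cos_re (z : ℂ) : (cos z).re = Real.cos z.re * Real.cosh z.im := by
  rw [cos_eq]; simp [cos_ofReal_re, cosh_ofReal_re]

lemma cos_im (z : ℂ) : (cos z).im = -(Real.sin z.re * Real.sinh z.im) := by
  rw [cos_eq]; simp [sin_ofReal_re, sinh_ofReal_re]

lemma sin_ne_zero_of_re_mem_Ioo {z : ℂ} (h₁ : -π < z.re) (h₂ : z.re < 0) : sin z ≠ 0 := by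
  have : (sin z).re < 0 := by
    rw [sin_re]
    exact mul_neg_of_neg_of_pos (Real.sin_neg_of_neg_of_neg_pi_lt h₂ h₁) (Real.cosh_pos _)
  exact fun h ↦ by simp [h] at this

lemma re_div_pos {z w : ℂ} (h : 0 < z.re * w.re + z.im * w.im) : 0 < (z / w).re := by
  have hw : w ≠ 0 := by rintro rfl; simp at h
  rw [div_re, ← add_div]
  exact div_pos h (normSq_pos.2 hw)

lemma im_div_nonneg {z w : ℂ} (h : 0 ≤ z.im * w.re - z.re * w.im) : 0 ≤ (z / w).im := by
  rw [div_im, ← sub_div]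
  exact div_nonneg h (normSq_nonneg w)

lemma im_div_nonpos {z w : ℂ} (h : z.im * w.re - z.re * w.im ≤ 0) : (z / w).im ≤ 0 := by
  rw [div_im, ← sub_div]
  exact div_nonpos_of_nonpos_of_nonneg h (normSq_nonneg w)

lemma re_sub_sin_div_one_sub_cos_pos {u : ℂ} (h₀ : 0 < u.re) (hπ : u.re < π) (him : 0 ≤ u.im) :
    0 < ((u - sin u) / (1 - cos u)).re := by
  apply re_div_pos
  simp only [sub_re, sub_im, one_re, one_im, sin_re, sin_im, cos_re, cos_im]
  linear_combination Real.sin_mul_cosh_sub_cos_lt h₀ hπ him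
    - Real.sin u.re * Real.cos u.re * Real.cosh_sq u.im

lemma im_sub_sin_div_one_sub_cos_nonneg {u : ℂ} (h₀ : 0 ≤ u.re) (hπ : u.re ≤ π)
    (him : 0 ≤ u.im) : 0 ≤ ((u - sin u) / (1 - cos u)).im := by
  apply im_div_nonneg
  simp only [sub_re, sub_im, one_re, one_im, sin_re, sin_im, cos_re, cos_im]
  linear_combination Real.cos_mul_sinh_add_mul_cosh_le h₀ hπ him
    - Real.sinh u.im * Real.cosh u.im * Real.sin_sq_add_cos_sq u.re

lemma hasDerivAt_mul_cot_mul {z : ℂ} {t : ℝ} (h : sin (t * z) ≠ 0) :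
    HasDerivAt (fun s : ℝ ↦ (s : ℂ) * cot (s * z))
      ((-(2 * (t * z)) - sin (-(2 * (t * z)))) / (1 - cos (-(2 * (t * z))))) t := by
  have hline : HasDerivAt (fun w : ℂ ↦ w * z) z t := hasDerivAt_mul_const z
  have hcot := ((hasDerivAt_cos _).comp _ hline).div ((hasDerivAt_sin _).comp _ hline) h
  have := ((hasDerivAt_id' (t : ℂ)).mul hcot).comp_ofReal
  simp only [Function.comp_def, Pi.div_def, Pi.mul_def] at this
  simp only [cot_eq_cos_div_sin]
  refine this.congr_deriv ?_
  rw [sin_neg, cos_neg, sin_two_mul, cos_two_mul]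
  have h2 : 1 - (2 * cos (t * z) ^ 2 - 1) = 2 * sin (t * z) ^ 2 := by
    linear_combination -2 * sin_sq_add_cos_sq (t * z)
  rw [h2]
  field_simp
  linear_combination -(t * z) * sin_sq_add_cos_sq (t * z)

lemma mul_cot_sub_mul_cot_re_pos_im_nonneg {a c : ℝ} {z : ℂ} (ha : 0 < a) (hac : a < c)
    (hre : -(π / 2) < c * z.re) (hre' : z.re < 0) (him : z.im ≤ 0) :
    0 < (c * cot (c * z) - a * cot (a * z)).re ∧ 0 ≤ (c * cot (c * z) - a * cot (a * z)).im := by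
  have hu : ∀ t ∈ Ioo a c, 0 < (-(2 * (t * z))).re ∧ (-(2 * (t * z))).re < π ∧
      0 ≤ (-(2 * (t * z))).im := fun t ht ↦ by
    have ht0 : 0 < t := ha.trans ht.1
    simp only [neg_re, neg_im, mul_re, mul_im, re_ofNat, im_ofNat, ofReal_re, ofReal_im, zero_mul,
      sub_zero, add_zero]
    refine ⟨by nlinarith, by nlinarith [ht.2], by nlinarith⟩
  have hderiv : ∀ t ∈ Icc a c, HasDerivAt (fun s : ℝ ↦ (s : ℂ) * cot (s * z))
      ((-(2 * (t * z)) - sin (-(2 * (t * z)))) / (1 - cos (-(2 * (t * z))))) t := fun t ht ↦ by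
    refine hasDerivAt_mul_cot_mul (sin_ne_zero_of_re_mem_Ioo ?_ ?_) <;>
      rw [re_ofReal_mul] <;> nlinarith [ha.trans_le ht.1, ht.2]
  constructor
  · have := lt_of_hasDerivAt_pos hac (fun t ht ↦ (hderiv t ht).complex_re) fun t ht ↦ by
      obtain ⟨h₀, hπ, him⟩ := hu t ht
      exact re_sub_sin_div_one_sub_cos_pos h₀ hπ him
    simpa using this
  · have := le_of_hasDerivAt_nonneg hac.le (fun t ht ↦ (hderiv t ht).complex_im) fun t ht ↦ by
      obtain ⟨h₀, hπ, him⟩ := hu t ht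
      exact im_sub_sin_div_one_sub_cos_nonneg h₀.le hπ.le him
    simpa using this

lemma sin_div_sin_re_pos_im_nonpos {a c : ℝ} {z : ℂ} (ha : 0 < a) (hac : a < c)
    (hre : -(π / 2) < c * z.re) (hre' : z.re < 0) (him : z.im ≤ 0) :
    0 < (sin (c * z) / sin (a * z)).re ∧ (sin (c * z) / sin (a * z)).im ≤ 0 := by
  have hcx : -(π / 2) < c * z.re ∧ c * z.re < 0 := ⟨hre, by nlinarith⟩
  have hax : -(π / 2) < a * z.re ∧ a * z.re < 0 := ⟨by nlinarith, by nlinarith⟩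
  constructor
  · apply re_div_pos
    simp only [sin_re, sin_im, re_ofReal_mul, im_ofReal_mul]
    have hsin : 0 < Real.sin (c * z.re) * Real.sin (a * z.re) :=
      mul_pos_of_neg_of_neg (Real.sin_neg_of_neg_of_neg_pi_lt hcx.2 (by linarith))
        (Real.sin_neg_of_neg_of_neg_pi_lt hax.2 (by linarith))
    have hcos : 0 < Real.cos (c * z.re) * Real.cos (a * z.re) :=
      mul_pos (Real.cos_pos_of_mem_Ioo ⟨hcx.1, by linarith⟩)
        (Real.cos_pos_of_mem_Ioo ⟨hax.1, by linarith⟩)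
    have hsinh : 0 ≤ Real.sinh (c * z.im) * Real.sinh (a * z.im) :=
      mul_nonneg_of_nonpos_of_nonpos (Real.sinh_nonpos_iff.2 (by nlinarith))
        (Real.sinh_nonpos_iff.2 (by nlinarith))
    linear_combination mul_pos hsin (mul_pos (Real.cosh_pos (c * z.im)) (Real.cosh_pos (a * z.im)))
      + mul_nonneg hcos.le hsinh
  · apply im_div_nonpos
    simp only [sin_re, sin_im, re_ofReal_mul, im_ofReal_mul]
    have key := Real.sin_mul_mul_sinh_mul_le (p := c - a) (q := c + a) (x := -z.re) (y := -z.im)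
      (by linarith) (by linarith) (by linarith) (by nlinarith) (by linarith)
    rw [show (c + a) * -z.re = -(c * z.re) + -(a * z.re) by ring,
      show (c - a) * -z.re = -(c * z.re) - -(a * z.re) by ring,
      show (c + a) * -z.im = -(c * z.im) + -(a * z.im) by ring,
      show (c - a) * -z.im = -(c * z.im) - -(a * z.im) by ring] at key
    simp only [Real.sin_add, Real.sin_sub, Real.sinh_add, Real.sinh_sub, Real.sin_neg,
      Real.cos_neg, Real.sinh_neg, Real.cosh_neg] at key
    linear_combination key / 2

lemma hasDerivAt_sin_mul_div_sin_mul {a c z : ℂ} (hc : sin (c * z) ≠ 0) (ha : sin (a * z) ≠ 0) :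
    HasDerivAt (fun w ↦ sin (c * w) / sin (a * w))
      (sin (c * z) / sin (a * z) * (c * cot (c * z) - a * cot (a * z))) z := by
  have hsin : ∀ b : ℂ, HasDerivAt (fun w ↦ sin (b * w)) (cos (b * z) * b) z := fun b ↦
    (hasDerivAt_sin _).comp z (hasDerivAt_const_mul b)
  refine ((hsin c).div (hsin a) ha).congr_deriv ?_
  rw [cot_eq_cos_div_sin, cot_eq_cos_div_sin]
  generalize sin (c * z) = sc, sin (a * z) = sa at *
  field_simp

lemma re_sin_div_sin_mul_cot_sub_pos {a c : ℝ} {z : ℂ} (ha : 0 < a) (hac : a < c)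
    (hre : -(π / 2) < c * z.re) (hre' : z.re < 0) :
    0 < (sin (c * z) / sin (a * z) * (c * cot (c * z) - a * cot (a * z))).re := by
  wlog him : z.im ≤ 0 generalizing z
  · have hconj : ∀ r : ℝ, (r : ℂ) * conj z = conj (r * z) := by simp
    have := this (z := conj z) (by simpa) (by simpa) (by simp; linarith)
    rw [hconj, hconj, sin_conj, sin_conj, cot_conj, cot_conj] at this
    rw [← conj_re]
    simpa only [map_mul, map_div₀, map_sub, conj_ofReal] using this
  obtain ⟨hg_re, hg_im⟩ := sin_div_sin_re_pos_im_nonpos ha hac hre hre' him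
  obtain ⟨hw_re, hw_im⟩ := mul_cot_sub_mul_cot_re_pos_im_nonneg ha hac hre hre' him
  rw [mul_re]
  linarith [mul_pos hg_re hw_re, mul_nonpos_of_nonpos_of_nonneg hg_im hw_im]

end Complex

/-- For `0 < α < π`, the symbol `K̂_α(z) = sin((π−α)z)/sin(πz)` is injective on
the open strip `{z : −1/2 < Re z < 0}`. -/
theorem mellin_symbol_injOn_strip (α : ℝ) (hα0 : 0 < α) (hαπ : α < Real.pi) :
    Set.InjOn
      (fun z : ℂ =>
        Complex.sin (((Real.pi - α : ℝ) : ℂ) * z) / Complex.sin ((Real.pi : ℂ) * z))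
      {z : ℂ | -(1 / 2) < z.re ∧ z.re < 0} := by
  set S := {z : ℂ | -(1 / 2) < z.re ∧ z.re < 0}
  have hb0 : 0 < π - α := by linarith
  have hbπ : π - α < π := by linarith
  have hre : ∀ z ∈ S, -(π / 2) < π * z.re := fun z hz ↦ by nlinarith [hz.1, pi_pos]
  have hsin : ∀ c : ℝ, 0 < c → c ≤ π → ∀ z ∈ S, Complex.sin (c * z) ≠ 0 := fun c hc hcπ z hz ↦
    Complex.sin_ne_zero_of_re_mem_Ioo (by rw [Complex.re_ofReal_mul]; nlinarith [hz.1, hre z hz])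
      (by rw [Complex.re_ofReal_mul]; nlinarith [hz.2])
  have hinv : InjOn (fun z : ℂ ↦ Complex.sin (π * z) / Complex.sin ((π - α : ℝ) * z)) S :=
    ((convex_halfSpace_re_gt _).inter (convex_halfSpace_re_lt _)).injOn_of_hasDerivAt_of_re_pos
      (fun z hz ↦ Complex.hasDerivAt_sin_mul_div_sin_mul (hsin π pi_pos le_rfl z hz)
        (hsin _ hb0 hbπ.le z hz))
      (fun z hz ↦ Complex.re_sin_div_sin_mul_cot_sub_pos hb0 hbπ (hre z hz) hz.2)
  exact InjOn.of_comp (g := Inv.inv) (by simpa only [Function.comp_def, inv_div] using hinv)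
end

section
/- Let 0 < α < π and fix a cut-off function φ: a nonincreasing C^∞ function on [0,∞) with φ ≡ 1 on a neighborhood of 0 and φ ≡ 0 on [1,∞). Let u(s) = (K_α φ)(s) − (1 − α/π) φ(s) for s > 0, where K_α φ(s) = ∫₀^∞ k_α(s,t) φ(t) dt. Then u is continuously differentiable on (0,∞), ∫₀^∞ |u(s)|² s^{−2} ds < ∞, and ∫₀^∞ |u'(s)|² ds < ∞. -/
open MeasureTheory Set Filter Real

namespace CornerAux

noncomputable def m (b c : ℝ) : ℝ → ℝ := fun r => b / (Real.pi * ((r - c)^2 + b^2))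

lemma den_pos {b : ℝ} (hb : 0 < b) (c r : ℝ) : 0 < (r - c)^2 + b^2 := by positivity

lemma m_pos {b : ℝ} (hb : 0 < b) (c r : ℝ) : 0 < m b c r := by
  have := den_pos hb c r
  have := Real.pi_pos
  unfold m; positivity

lemma m_cont {b : ℝ} (hb : 0 < b) (c : ℝ) : Continuous (m b c) := by
  apply continuous_const.div (by fun_prop)
  intro r
  have := den_pos hb c r
  have := Real.pi_pos
  positivity

lemma m_le {b : ℝ} (hb : 0 < b) (c r : ℝ) : m b c r ≤ (Real.pi * b)⁻¹ := by
  have hπ := Real.pi_pos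
  have h : b^2 ≤ (r - c)^2 + b^2 := by nlinarith [sq_nonneg (r - c)]
  have h2 : b / (Real.pi * b^2) = (Real.pi * b)⁻¹ := by
    field_simp
  calc m b c r ≤ b / (Real.pi * b^2) := by
        unfold m
        gcongr
    _ = (Real.pi * b)⁻¹ := h2

lemma m_le' {b c r : ℝ} (hb : 0 < b) (hbc : c^2 + b^2 = 1) (hr : 0 < r) :
    m b c r ≤ (Real.pi * b)⁻¹ * (r^2)⁻¹ := by
  have hπ := Real.pi_pos
  have h2 : b / (Real.pi * (b^2 * r^2)) = (Real.pi * b)⁻¹ * (r^2)⁻¹ := by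
    field_simp
  calc m b c r ≤ b / (Real.pi * (b^2 * r^2)) := by
        unfold m; gcongr
        nlinarith [sq_nonneg (r*c - 1)]
    _ = (Real.pi * b)⁻¹ * (r^2)⁻¹ := h2

lemma m_hasDeriv {b : ℝ} (hb : 0 < b) (c r : ℝ) :
    HasDerivAt (fun r => (1/Real.pi) * Real.arctan ((r - c)/b)) (m b c r) r := by
  have h1 : HasDerivAt (fun r : ℝ => (r - c)/b) (1/b) r := by
    simpa using (((hasDerivAt_id r).sub_const c).div_const b)
  have h2 := (Real.hasDerivAt_arctan ((r - c)/b)).comp r h1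
  have h3 := h2.const_mul (1/Real.pi)
  refine h3.congr_deriv ?_
  have hd := den_pos hb c r
  have hπ := Real.pi_pos
  unfold m
  field_simp
  ring

lemma m_tendsto {b : ℝ} (hb : 0 < b) (c : ℝ) :
    Tendsto (fun r => (1/Real.pi) * Real.arctan ((r - c)/b)) atTop (nhds (1/2)) := by
  have h1 : Tendsto (fun r : ℝ => (r - c)/b) atTop atTop := by
    apply Tendsto.atTop_div_const hb
    exact tendsto_atTop_add_const_right _ (-c) tendsto_id
  have h2 : Tendsto (fun r : ℝ => Real.arctan ((r - c)/b)) atTop (nhds (Real.pi/2)) :=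
    (Real.tendsto_arctan_atTop.mono_right nhdsWithin_le_nhds).comp h1
  have h3 := h2.const_mul (1/Real.pi)
  convert h3 using 2
  have := Real.pi_ne_zero
  field_simp

lemma m_integrableOn {b : ℝ} (hb : 0 < b) (c a : ℝ) : IntegrableOn (m b c) (Ioi a) := by
  apply integrableOn_Ioi_deriv_of_nonneg' (g := fun r => (1/Real.pi) * Real.arctan ((r - c)/b))
    (fun x _ => m_hasDeriv hb c x) (fun x _ => (m_pos hb c x).le) (m_tendsto hb c)

lemma m_integral {b : ℝ} (hb : 0 < b) (c a : ℝ) :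
    ∫ r in Ioi a, m b c r = 1/2 - (1/Real.pi) * Real.arctan ((a - c)/b) :=
  integral_Ioi_of_hasDerivAt_of_nonneg' (fun x _ => m_hasDeriv hb c x)
    (fun x _ => (m_pos hb c x).le) (m_tendsto hb c)

lemma m_integral_zero {a : ℝ} (ha0 : 0 < a) (hap : a < Real.pi) :
    ∫ r in Ioi (0:ℝ), m (Real.sin a) (Real.cos a) r = 1 - a/Real.pi := by
  rw [m_integral (Real.sin_pos_of_pos_of_lt_pi ha0 hap) _ 0]
  have h1 : ((0:ℝ) - Real.cos a)/Real.sin a = Real.tan (a - Real.pi/2) := by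
    rw [show a - Real.pi/2 = -(Real.pi/2 - a) by ring, Real.tan_neg, Real.tan_pi_div_two_sub,
      Real.tan_eq_sin_div_cos, inv_div]
    ring
  rw [h1, Real.arctan_tan (by linarith) (by linarith)]
  have := Real.pi_ne_zero
  field_simp
  ring

lemma invsq_hasDeriv {a : ℝ} (ha : 0 < a) :
    ∀ x ∈ Ici a, HasDerivAt (fun r : ℝ => -r⁻¹) ((x^2)⁻¹) x := by
  intro x hx
  have hx0 : x ≠ 0 := ne_of_gt (lt_of_lt_of_le ha hx)
  exact ((hasDerivAt_inv hx0).neg).congr_deriv (by ring)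

lemma invsq_tendsto : Tendsto (fun r : ℝ => -r⁻¹) atTop (nhds 0) := by
  simpa using (tendsto_inv_atTop_zero (𝕜 := ℝ)).neg

lemma invsq_integrableOn {a : ℝ} (ha : 0 < a) :
    IntegrableOn (fun r : ℝ => (r^2)⁻¹) (Ioi a) :=
  integrableOn_Ioi_deriv_of_nonneg' (invsq_hasDeriv ha) (fun x hx => by positivity) invsq_tendsto

lemma invsq_integral {a : ℝ} (ha : 0 < a) : ∫ r in Ioi a, (r^2)⁻¹ = a⁻¹ := by
  have := integral_Ioi_of_hasDerivAt_of_nonneg' (invsq_hasDeriv ha)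
    (fun x hx => by positivity) invsq_tendsto
  simpa using this

lemma m_tail {b c a : ℝ} (hb : 0 < b) (hbc : c^2 + b^2 = 1) (ha : 0 < a) :
    ∫ r in Ioi a, m b c r ≤ (Real.pi * b)⁻¹ * a⁻¹ := by
  have h1 : ∫ r in Ioi a, m b c r ≤ ∫ r in Ioi a, (Real.pi*b)⁻¹ * (r^2)⁻¹ :=
    setIntegral_mono_on (m_integrableOn hb c a) ((invsq_integrableOn ha).const_mul _)
      measurableSet_Ioi (fun x hx => m_le' hb hbc (ha.trans hx))
  calc ∫ r in Ioi a, m b c r ≤ ∫ r in Ioi a, (Real.pi*b)⁻¹ * (r^2)⁻¹ := h1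
    _ = (Real.pi*b)⁻¹ * a⁻¹ := by rw [MeasureTheory.integral_const_mul, invsq_integral ha]

lemma integrableOn_of_zero_tail {f : ℝ → ℝ} (hf : Continuous f) {R : ℝ} (hR : 0 < R)
    (h0 : ∀ x, R ≤ x → f x = 0) : IntegrableOn f (Ioi 0) := by
  have h1 : IntegrableOn f (Ioc 0 R) := hf.integrableOn_Ioc
  have h2 : IntegrableOn f (Ioi R) :=
    (integrableOn_congr_fun (g := fun _ => 0) (fun x hx => h0 x (le_of_lt hx))
      measurableSet_Ioi).mpr integrableOn_zero
  have := h1.union h2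
  rwa [Ioc_union_Ioi_eq_Ioi hR.le] at this

lemma cut_low {f : ℝ → ℝ} {a : ℝ} (ha : 0 < a) (hf : IntegrableOn f (Ioi 0))
    (h0 : ∀ x ∈ Ioc (0:ℝ) a, f x = 0) : ∫ x in Ioi (0:ℝ), f x = ∫ x in Ioi a, f x := by
  rw [← Ioc_union_Ioi_eq_Ioi ha.le (a := (0:ℝ)),
    setIntegral_union Ioc_disjoint_Ioi_same measurableSet_Ioi
      (hf.mono_set Ioc_subset_Ioi_self) (hf.mono_set (Ioi_subset_Ioi ha.le)),
    setIntegral_congr_fun (g := fun _ => 0) measurableSet_Ioc h0]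
  simp

lemma cut_high {f : ℝ → ℝ} {a R : ℝ} (haR : a ≤ R) (hf : IntegrableOn f (Ioi a))
    (h0 : ∀ x ∈ Ioi R, f x = 0) : ∫ x in Ioi a, f x = ∫ x in Ioc a R, f x := by
  rw [← Ioc_union_Ioi_eq_Ioi haR,
    setIntegral_union Ioc_disjoint_Ioi_same measurableSet_Ioi
      (hf.mono_set Ioc_subset_Ioi_self) (hf.mono_set (Ioi_subset_Ioi haR)),
    setIntegral_congr_fun (g := fun _ => 0) measurableSet_Ioi h0]
  simp

end CornerAux

open CornerAux

set_option maxHeartbeats 1000000 in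
/-- for a cut-off function `φ`, the function
`u = K_α φ − (1 − α/π)φ` is `C¹` on `(0,∞)` and belongs to the weighted Sobolev space
`W₀¹((0,∞))`, i.e. `∫₀^∞ |u(s)|² s^{−2} ds < ∞` and `∫₀^∞ |u'(s)|² ds < ∞`. -/
theorem corner_operator_on_cutoff (α : ℝ) (hα0 : 0 < α) (hαπ : α < Real.pi)
    (φ : ℝ → ℝ) (hφsmooth : ContDiff ℝ (⊤ : ℕ∞) φ) (hφmono : AntitoneOn φ (Ici 0))
    (hφone : ∃ δ > 0, ∀ s ∈ Icc (0 : ℝ) δ, φ s = 1)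
    (hφzero : ∀ s : ℝ, 1 ≤ s → φ s = 0)
    (u : ℝ → ℝ)
    (hu : ∀ s : ℝ, u s =
      (∫ t in Ioi (0 : ℝ),
        (s * Real.sin α / (Real.pi * (s ^ 2 - 2 * s * t * Real.cos α + t ^ 2))) * φ t)
      - (1 - α / Real.pi) * φ s) :
    ContDiffOn ℝ 1 u (Ioi 0) ∧
    IntegrableOn (fun s : ℝ => (u s) ^ 2 / s ^ 2) (Ioi 0) ∧
    IntegrableOn (fun s : ℝ => (deriv u s) ^ 2) (Ioi 0) := by
  have hπ := Real.pi_pos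
  set b := Real.sin α with hbe
  set c := Real.cos α with hce
  have hb : 0 < b := Real.sin_pos_of_pos_of_lt_pi hα0 hαπ
  have hbc : c^2 + b^2 = 1 := by rw [hbe, hce]; exact Real.cos_sq_add_sin_sq α
  set m : ℝ → ℝ := CornerAux.m b c with hme
  have hmint : ∀ a : ℝ, IntegrableOn m (Ioi a) := fun a => m_integrableOn hb c a
  have hmpos : ∀ r : ℝ, 0 < m r := m_pos hb c
  have hmcont : Continuous m := m_cont hb c
  have hmle : ∀ r : ℝ, m r ≤ (Real.pi * b)⁻¹ := m_le hb c
  have hmle' : ∀ r : ℝ, 0 < r → m r ≤ (Real.pi * b)⁻¹ * (r^2)⁻¹ := fun r hr => m_le' hb hbc hr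
  have hmass : ∫ r in Ioi (0:ℝ), m r = 1 - α/Real.pi := m_integral_zero hα0 hαπ
  -- cutoff facts
  obtain ⟨δ₀, hδ₀, hδone⟩ := hφone
  set δ : ℝ := min (δ₀/2) 2⁻¹ with hδdef
  have hδpos : 0 < δ := lt_min (by linarith) (by norm_num)
  have hδlt : δ < δ₀ := lt_of_le_of_lt (min_le_left _ _) (by linarith)
  have hδle : δ ≤ 1 := le_trans (min_le_right _ _) (by norm_num)
  have hφ0 : φ 0 = 1 := hδone 0 ⟨le_refl 0, hδ₀.le⟩
  have hφle1 : ∀ y : ℝ, 0 ≤ y → φ y ≤ 1 := by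
    intro y hy
    calc φ y ≤ φ 0 := hφmono self_mem_Ici hy hy
      _ = 1 := hφ0
  have hφnn : ∀ y : ℝ, 0 ≤ y → 0 ≤ φ y := by
    intro y hy
    rcases le_or_gt y 1 with h | h
    · calc (0:ℝ) = φ 1 := (hφzero 1 le_rfl).symm
        _ ≤ φ y := hφmono hy (by norm_num) h
    · rw [hφzero y h.le]
  have hφcont : Continuous φ := hφsmooth.continuous
  have hdφ : ∀ y : ℝ, HasDerivAt φ (deriv φ y) y :=
    fun y => (hφsmooth.differentiable (by simp) y).hasDerivAt
  have hφ'cont : Continuous (deriv φ) := hφsmooth.continuous_deriv (by simp)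
  have hφ'zero : ∀ y : ℝ, 1 < y → deriv φ y = 0 := by
    intro y hy
    have h : φ =ᶠ[nhds y] (fun _ => 0) := by
      filter_upwards [Ioi_mem_nhds hy] with x hx
      exact hφzero x (le_of_lt hx)
    rw [h.deriv_eq, deriv_const]
  have hφ'one : ∀ y : ℝ, 0 < y → y < δ₀ → deriv φ y = 0 := by
    intro y hy hy'
    have h : φ =ᶠ[nhds y] (fun _ => 1) := by
      filter_upwards [Ioo_mem_nhds hy hy'] with x hx
      exact hδone x ⟨hx.1.le, hx.2.le⟩
    rw [h.deriv_eq, deriv_const]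
  obtain ⟨z, hz, hMz'⟩ := (isCompact_Icc (a := (0:ℝ)) (b := 2)).exists_isMaxOn
    ⟨0, by constructor <;> norm_num⟩ ((continuous_abs.comp hφ'cont).continuousOn)
  have hMz : ∀ y ∈ Icc (0:ℝ) 2, |deriv φ y| ≤ |deriv φ z| := fun y hy => hMz' hy
  set M : ℝ := |deriv φ z| with hMe
  have hM0 : 0 ≤ M := abs_nonneg _
  have hM : ∀ y : ℝ, 0 ≤ y → |deriv φ y| ≤ M := by
    intro y hy
    rcases le_or_gt y 2 with h | h
    · exact hMz y ⟨hy, h⟩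
    · rw [hφ'zero y (by linarith)]; simpa using hM0
  -- integrability of the two integrands
  have hint1 : ∀ s : ℝ, 0 < s → IntegrableOn (fun r => m r * φ (s*r)) (Ioi 0) := by
    intro s hs
    apply integrableOn_of_zero_tail (by fun_prop) (R := s⁻¹) (by positivity)
    intro x hx
    have h1 : 1 ≤ s * x := by
      rw [show (1:ℝ) = s * s⁻¹ by field_simp]
      exact mul_le_mul_of_nonneg_left hx hs.le
    rw [hφzero _ h1, mul_zero]
  have hint2 : ∀ s : ℝ, 0 < s → IntegrableOn (fun r => m r * (deriv φ (s*r) * r)) (Ioi 0) := by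
    intro s hs
    apply integrableOn_of_zero_tail (by fun_prop) (R := 2*s⁻¹) (by positivity)
    intro x hx
    have h1 : 1 < s * x := by
      have : s * (2*s⁻¹) ≤ s * x := mul_le_mul_of_nonneg_left hx hs.le
      have h2 : s * (2*s⁻¹) = 2 := by field_simp
      linarith
    rw [hφ'zero _ h1, zero_mul, mul_zero]
  -- substitution
  have hsub : ∀ s : ℝ, 0 < s →
      (∫ t in Ioi (0:ℝ), (s * b / (Real.pi * (s ^ 2 - 2 * s * t * c + t ^ 2))) * φ t)
        = ∫ r in Ioi (0:ℝ), m r * φ (s*r) := by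
    intro s hs
    have h1 := MeasureTheory.integral_comp_mul_left_Ioi
      (fun t => (s * b / (Real.pi * (s ^ 2 - 2 * s * t * c + t ^ 2))) * φ t) 0 hs
    rw [mul_zero, smul_eq_mul] at h1
    beta_reduce at h1
    have h2 : ∀ r : ℝ, m r * φ (s*r)
        = s * ((s * b / (Real.pi * (s ^ 2 - 2 * s * (s*r) * c + (s*r) ^ 2))) * φ (s*r)) := by
      intro r
      have hd : s ^ 2 - 2 * s * (s*r) * c + (s*r) ^ 2 = s^2 * ((r - c)^2 + b^2) := by
        linear_combination (-(s^2)) * hbc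
      rw [hd, hme]
      unfold CornerAux.m
      have hden := den_pos hb c r
      field_simp
    symm
    calc (∫ r in Ioi (0:ℝ), m r * φ (s*r))
        = ∫ r in Ioi (0:ℝ), s * ((s * b / (Real.pi * (s ^ 2 - 2 * s * (s*r) * c + (s*r) ^ 2))) * φ (s*r)) :=
          setIntegral_congr_fun measurableSet_Ioi (fun r _ => h2 r)
      _ = s * ∫ r in Ioi (0:ℝ), (s * b / (Real.pi * (s ^ 2 - 2 * s * (s*r) * c + (s*r) ^ 2))) * φ (s*r) :=
          MeasureTheory.integral_const_mul s _
      _ = s * (s⁻¹ * ∫ t in Ioi (0:ℝ), (s * b / (Real.pi * (s ^ 2 - 2 * s * t * c + t ^ 2))) * φ t) := by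
          rw [h1]
      _ = ∫ t in Ioi (0:ℝ), (s * b / (Real.pi * (s ^ 2 - 2 * s * t * c + t ^ 2))) * φ t := by
          rw [← mul_assoc, mul_inv_cancel₀ (ne_of_gt hs), one_mul]
  have hurep : ∀ s : ℝ, 0 < s →
      u s = (∫ r in Ioi (0:ℝ), m r * φ (s*r)) - (1 - α/Real.pi) * φ s := by
    intro s hs
    rw [hu s, hsub s hs]
  -- the candidate derivative
  set v : ℝ → ℝ := fun s =>
    (∫ r in Ioi (0:ℝ), m r * (deriv φ (s*r) * r)) - (1 - α/Real.pi) * deriv φ s with hve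
  -- shared bound facts
  have hbound_le : ∀ s₀ : ℝ, 0 < s₀ → ∀ x ∈ Metric.ball s₀ (s₀/2), ∀ r ∈ Ioi (0:ℝ),
      ‖m r * (deriv φ (x*r) * r)‖ ≤ M * (m r * min r (2/s₀)) := by
    intro s₀ hs₀ x hx r hr
    have hxl : s₀/2 < x := by
      rw [Metric.mem_ball, Real.dist_eq, abs_lt] at hx
      linarith [hx.1]
    have hx0 : 0 < x := lt_trans (by positivity) hxl
    have hr0 : (0:ℝ) < r := hr
    rw [Real.norm_eq_abs, abs_mul, abs_mul, abs_of_pos (hmpos r), abs_of_pos hr0]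
    rcases le_or_gt r (2/s₀) with h | h
    · have h1 : |deriv φ (x*r)| ≤ M := hM _ (by positivity)
      rw [min_eq_left h]
      calc m r * (|deriv φ (x*r)| * r) ≤ m r * (M * r) :=
            mul_le_mul_of_nonneg_left (mul_le_mul_of_nonneg_right h1 hr0.le) (hmpos r).le
        _ = M * (m r * r) := by ring
    · have h1 : (1:ℝ) < x * r := by
        calc (1:ℝ) = (s₀/2) * (2/s₀) := by field_simp
          _ < x * r := mul_lt_mul'' hxl h (by positivity) (by positivity)
      rw [hφ'zero _ h1, abs_zero, zero_mul, mul_zero]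
      exact mul_nonneg hM0 (mul_nonneg (hmpos r).le (le_min hr0.le (by positivity)))
  have hbound_int : ∀ s₀ : ℝ, 0 < s₀ →
      IntegrableOn (fun r => M * (m r * min r (2/s₀))) (Ioi 0) := by
    intro s₀ hs₀
    apply Integrable.mono' (g := fun r => (M * (2/s₀)) * m r) ((hmint 0).const_mul _)
      ((by fun_prop : Continuous fun r => M * (m r * min r (2/s₀))).aestronglyMeasurable)
    filter_upwards [ae_restrict_mem measurableSet_Ioi] with r hr
    have hr0 : (0:ℝ) < r := hr
    have hmin0 : 0 ≤ min r (2/s₀) := le_min hr0.le (by positivity)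
    rw [Real.norm_eq_abs, abs_of_nonneg (mul_nonneg hM0 (mul_nonneg (hmpos r).le hmin0))]
    calc M * (m r * min r (2/s₀)) ≤ M * (m r * (2/s₀)) :=
          mul_le_mul_of_nonneg_left
            (mul_le_mul_of_nonneg_left (min_le_right _ _) (hmpos r).le) hM0
      _ = M * (2/s₀) * m r := by ring
  -- derivative of the integral term
  have hw : ∀ s₀ : ℝ, 0 < s₀ → HasDerivAt (fun s => ∫ r in Ioi (0:ℝ), m r * φ (s*r))
      (∫ r in Ioi (0:ℝ), m r * (deriv φ (s₀*r) * r)) s₀ := by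
    intro s₀ hs₀
    have key := hasDerivAt_integral_of_dominated_loc_of_deriv_le
      (μ := volume.restrict (Ioi 0))
      (F := fun x r => m r * φ (x*r)) (F' := fun x r => m r * (deriv φ (x*r) * r))
      (x₀ := s₀) (bound := fun r => M * (m r * min r (2/s₀)))
      (Metric.ball_mem_nhds s₀ (show (0:ℝ) < s₀/2 by positivity))
      (Filter.Eventually.of_forall fun x =>
        (by fun_prop : Continuous fun r => m r * φ (x*r)).aestronglyMeasurable)
      (hint1 s₀ hs₀)
      ((by fun_prop : Continuous fun r => m r * (deriv φ (s₀*r) * r)).aestronglyMeasurable)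
      ?_ (hbound_int s₀ hs₀) ?_
    · exact key.2
    · filter_upwards [ae_restrict_mem measurableSet_Ioi] with r hr
      intro x hx
      exact hbound_le s₀ hs₀ x hx r hr
    · apply Filter.Eventually.of_forall
      intro r x _
      have h1 : HasDerivAt (fun y : ℝ => φ (y*r)) (deriv φ (x*r) * r) x := by
        exact (hdφ (x*r)).comp x (hasDerivAt_mul_const r)
      exact h1.const_mul (m r)
  have hudiff : ∀ s₀ : ℝ, s₀ ∈ Ioi (0:ℝ) → HasDerivAt u (v s₀) s₀ := by
    intro s₀ hs₀
    have h1 := (hw s₀ hs₀).sub ((hdφ s₀).const_mul (1 - α/Real.pi))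
    apply h1.congr_of_eventuallyEq
    filter_upwards [Ioi_mem_nhds hs₀] with x hx
    exact hurep x hx
  have hderiv_eq : ∀ s ∈ Ioi (0:ℝ), deriv u s = v s := fun s hs => (hudiff s hs).deriv
  have hvcont : ContinuousOn v (Ioi 0) := by
    intro s₀ hs₀
    have hs₀' : (0:ℝ) < s₀ := hs₀
    have h2 : ContinuousAt (fun s => ∫ r in Ioi (0:ℝ), m r * (deriv φ (s*r) * r)) s₀ := by
      apply continuousAt_of_dominated (bound := fun r => M * (m r * min r (2/s₀)))
      · exact Filter.Eventually.of_forall fun x =>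
          (by fun_prop : Continuous fun r => m r * (deriv φ (x*r) * r)).aestronglyMeasurable
      · filter_upwards [Metric.ball_mem_nhds s₀ (by positivity : (0:ℝ) < s₀/2)] with x hx
        filter_upwards [ae_restrict_mem measurableSet_Ioi] with r hr
        exact hbound_le s₀ hs₀' x hx r hr
      · exact hbound_int s₀ hs₀'
      · exact Filter.Eventually.of_forall fun r =>
          (by fun_prop : Continuous fun x => m r * (deriv φ (x*r) * r)).continuousAt
    exact (h2.sub (continuousAt_const.mul hφ'cont.continuousAt)).continuousWithinAt
  have hucont : ContinuousOn u (Ioi 0) :=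
    fun s hs => ((hudiff s hs).differentiableAt.continuousAt.continuousWithinAt)
  have hducont : ContinuousOn (deriv u) (Ioi 0) := hvcont.congr hderiv_eq
  have hcd : ContDiffOn ℝ 1 u (Ioi 0) := by
    rw [← zero_add (1 : WithTop ℕ∞), contDiffOn_succ_iff_deriv_of_isOpen isOpen_Ioi]
    refine ⟨fun s hs => ((hudiff s hs).differentiableAt.differentiableWithinAt), by simp, ?_⟩
    rw [contDiffOn_zero]
    exact hducont
  -- pointwise bounds
  have hu_small : ∀ s ∈ Ioc (0:ℝ) δ, |u s| ≤ (Real.pi*b)⁻¹ * δ⁻¹ * s := by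
    intro s hs
    obtain ⟨hs0, hsδ⟩ := hs
    have hφs : φ s = 1 := hδone s ⟨hs0.le, le_trans hsδ hδlt.le⟩
    have hsplit : u s = ∫ r in Ioi (0:ℝ), (m r * φ (s*r) - m r) := by
      rw [hurep s hs0, hφs, mul_one, ← hmass,
        ← integral_sub (hint1 s hs0) (hmint 0)]
    have hintsub : IntegrableOn (fun r => m r * φ (s*r) - m r) (Ioi 0) :=
      (hint1 s hs0).sub (hmint 0)
    have ha : (0:ℝ) < δ/s := by positivity
    have hzero : ∀ x ∈ Ioc (0:ℝ) (δ/s), m x * φ (s*x) - m x = 0 := by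
      intro x hx
      have hx0 : (0:ℝ) < x := hx.1
      have h1 : s * x ≤ δ := by
        calc s * x ≤ s * (δ/s) := mul_le_mul_of_nonneg_left hx.2 hs0.le
          _ = δ := by field_simp
      have h2 : φ (s*x) = 1 := hδone (s*x) ⟨by positivity, le_trans h1 hδlt.le⟩
      rw [h2, mul_one, sub_self]
    rw [hsplit, cut_low ha hintsub hzero]
    have h1 : |∫ x in Ioi (δ/s), (m x * φ (s*x) - m x)| ≤ ∫ x in Ioi (δ/s), m x := by
      refine le_trans ?_ (setIntegral_mono_on ((hintsub.mono_set (Ioi_subset_Ioi ha.le)).abs)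
        (hmint _) measurableSet_Ioi ?_)
      · simpa [Real.norm_eq_abs] using norm_integral_le_integral_norm
          (μ := volume.restrict (Ioi (δ/s))) (fun x => m x * φ (s*x) - m x)
      · intro x hx
        have hx0 : 0 < x := lt_trans ha hx
        have hsx : 0 ≤ s * x := by positivity
        rw [show m x * φ (s*x) - m x = m x * (φ (s*x) - 1) by ring, abs_mul,
          abs_of_pos (hmpos x)]
        have h2 : |φ (s*x) - 1| ≤ 1 := by
          rw [abs_le]
          constructor
          · linarith [hφnn (s*x) hsx]
          · linarith [hφle1 (s*x) hsx]
        calc m x * |φ (s*x) - 1| ≤ m x * 1 := mul_le_mul_of_nonneg_left h2 (hmpos x).le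
          _ = m x := mul_one _
    refine le_trans h1 (le_trans (m_tail hb hbc ha) (le_of_eq ?_))
    rw [inv_div]
    ring
  have hu_large : ∀ s : ℝ, 1 < s → |u s| ≤ (Real.pi*b)⁻¹ * s⁻¹ := by
    intro s hs1
    have hs0 : (0:ℝ) < s := lt_trans one_pos hs1
    have hsi : (0:ℝ) < s⁻¹ := by positivity
    have hφs : φ s = 0 := hφzero s hs1.le
    rw [hurep s hs0, hφs, mul_zero, sub_zero]
    have hzero : ∀ x ∈ Ioi s⁻¹, m x * φ (s*x) = 0 := by
      intro x hx
      have h1 : 1 ≤ s * x := by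
        calc (1:ℝ) = s * s⁻¹ := by field_simp
          _ ≤ s * x := mul_le_mul_of_nonneg_left (le_of_lt (mem_Ioi.mp hx)) hs0.le
      rw [hφzero _ h1, mul_zero]
    rw [cut_high hsi.le (hint1 s hs0) hzero]
    have hb1 : ∀ x ∈ Ioc (0:ℝ) s⁻¹, ‖m x * φ (s*x)‖ ≤ (Real.pi*b)⁻¹ := by
      intro x hx
      have hx0 : 0 < x := hx.1
      rw [Real.norm_eq_abs, abs_mul, abs_of_pos (hmpos x), abs_of_nonneg (hφnn _ (by positivity))]
      calc m x * φ (s*x) ≤ m x * 1 :=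
            mul_le_mul_of_nonneg_left (hφle1 _ (by positivity)) (hmpos x).le
        _ = m x := mul_one _
        _ ≤ (Real.pi*b)⁻¹ := hmle x
    have hnorm := norm_setIntegral_le_of_norm_le_const (μ := volume)
      measure_Ioc_lt_top hb1
    rw [Real.norm_eq_abs] at hnorm
    refine le_trans hnorm (le_of_eq ?_)
    rw [Measure.real, Real.volume_Ioc, ENNReal.toReal_ofReal (by linarith), sub_zero]
  have hv_small : ∀ s ∈ Ioc (0:ℝ) δ, |v s| ≤ M * ((Real.pi*b)⁻¹ * δ⁻¹) := by
    intro s hs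
    obtain ⟨hs0, hsδ⟩ := hs
    have hds : deriv φ s = 0 := hφ'one s hs0 (lt_of_le_of_lt hsδ hδlt)
    have hveq : v s = ∫ r in Ioi (0:ℝ), m r * (deriv φ (s*r) * r) := by
      rw [hve]
      simp [hds]
    rw [hveq]
    have ha : (0:ℝ) < δ/s := by positivity
    have haR : δ/s ≤ s⁻¹ := by
      rw [← one_div]
      gcongr
    have hzero_low : ∀ x ∈ Ioc (0:ℝ) (δ/s), m x * (deriv φ (s*x) * x) = 0 := by
      intro x hx
      have hx0 : (0:ℝ) < x := hx.1
      have h1 : s * x ≤ δ := by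
        calc s * x ≤ s * (δ/s) := mul_le_mul_of_nonneg_left hx.2 hs0.le
          _ = δ := by field_simp
      rw [hφ'one (s*x) (by positivity) (lt_of_le_of_lt h1 hδlt), zero_mul, mul_zero]
    have hzero_high : ∀ x ∈ Ioi s⁻¹, m x * (deriv φ (s*x) * x) = 0 := by
      intro x hx
      have h1 : 1 < s * x := by
        calc (1:ℝ) = s * s⁻¹ := by field_simp
          _ < s * x := mul_lt_mul_of_pos_left (mem_Ioi.mp hx) hs0
      rw [hφ'zero _ h1, zero_mul, mul_zero]
    rw [cut_low ha (hint2 s hs0) hzero_low,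
      cut_high haR ((hint2 s hs0).mono_set (Ioi_subset_Ioi ha.le)) hzero_high]
    have hb1 : ∀ x ∈ Ioc (δ/s) s⁻¹, ‖m x * (deriv φ (s*x) * x)‖
        ≤ M * ((Real.pi*b)⁻¹ * (s/δ)) := by
      intro x hx
      have hx0 : 0 < x := lt_trans ha hx.1
      rw [Real.norm_eq_abs, abs_mul, abs_mul, abs_of_pos (hmpos x), abs_of_pos hx0]
      have h2 : m x * x ≤ (Real.pi*b)⁻¹ * (s/δ) := by
        calc m x * x ≤ ((Real.pi*b)⁻¹ * (x^2)⁻¹) * x :=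
              mul_le_mul_of_nonneg_right (hmle' x hx0) hx0.le
          _ = (Real.pi*b)⁻¹ * x⁻¹ := by
              field_simp
          _ ≤ (Real.pi*b)⁻¹ * (s/δ) := by
              apply mul_le_mul_of_nonneg_left ?_ (by positivity)
              rw [← inv_div δ s]
              exact inv_anti₀ ha hx.1.le
      calc m x * (|deriv φ (s*x)| * x) = (m x * x) * |deriv φ (s*x)| := by ring
        _ ≤ ((Real.pi*b)⁻¹ * (s/δ)) * M :=
            mul_le_mul h2 (hM _ (by positivity)) (abs_nonneg _) (by positivity)
        _ = M * ((Real.pi*b)⁻¹ * (s/δ)) := by ring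
    have hnorm := norm_setIntegral_le_of_norm_le_const (μ := volume)
      measure_Ioc_lt_top hb1
    rw [Real.norm_eq_abs] at hnorm
    refine le_trans hnorm ?_
    rw [Measure.real, Real.volume_Ioc, ENNReal.toReal_ofReal (by linarith)]
    have h3 : s⁻¹ - δ/s ≤ s⁻¹ := by
      have := ha.le
      linarith
    calc M * ((Real.pi*b)⁻¹ * (s/δ)) * (s⁻¹ - δ/s)
        ≤ M * ((Real.pi*b)⁻¹ * (s/δ)) * s⁻¹ :=
          mul_le_mul_of_nonneg_left h3 (by positivity)
      _ = M * ((Real.pi*b)⁻¹ * δ⁻¹) := by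
          field_simp
  have hv_large : ∀ s : ℝ, 1 < s → |v s| ≤ M * (Real.pi*b)⁻¹ * s⁻¹ := by
    intro s hs1
    have hs0 : (0:ℝ) < s := lt_trans one_pos hs1
    have hsi : (0:ℝ) < s⁻¹ := by positivity
    have hds : deriv φ s = 0 := hφ'zero s hs1
    have hveq : v s = ∫ r in Ioi (0:ℝ), m r * (deriv φ (s*r) * r) := by
      rw [hve]
      simp [hds]
    rw [hveq]
    have hzero_high : ∀ x ∈ Ioi s⁻¹, m x * (deriv φ (s*x) * x) = 0 := by
      intro x hx
      have h1 : 1 < s * x := by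
        calc (1:ℝ) = s * s⁻¹ := by field_simp
          _ < s * x := mul_lt_mul_of_pos_left (mem_Ioi.mp hx) hs0
      rw [hφ'zero _ h1, zero_mul, mul_zero]
    rw [cut_high hsi.le (hint2 s hs0) hzero_high]
    have hb1 : ∀ x ∈ Ioc (0:ℝ) s⁻¹, ‖m x * (deriv φ (s*x) * x)‖
        ≤ (Real.pi*b)⁻¹ * (M * s⁻¹) := by
      intro x hx
      have hx0 : 0 < x := hx.1
      rw [Real.norm_eq_abs, abs_mul, abs_mul, abs_of_pos (hmpos x), abs_of_pos hx0]
      apply mul_le_mul (hmle x) ?_ (by positivity) (by positivity)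
      exact mul_le_mul (hM _ (by positivity)) hx.2 hx0.le hM0
    have hnorm := norm_setIntegral_le_of_norm_le_const (μ := volume)
      measure_Ioc_lt_top hb1
    rw [Real.norm_eq_abs] at hnorm
    refine le_trans hnorm ?_
    rw [Measure.real, Real.volume_Ioc, ENNReal.toReal_ofReal (by linarith), sub_zero]
    have h4 : s⁻¹ ≤ 1 := by
      rw [inv_le_one_iff₀]
      right
      exact hs1.le
    calc (Real.pi*b)⁻¹ * (M * s⁻¹) * s⁻¹ ≤ (Real.pi*b)⁻¹ * (M * s⁻¹) * 1 :=
          mul_le_mul_of_nonneg_left h4 (by positivity)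
      _ = M * (Real.pi*b)⁻¹ * s⁻¹ := by ring
  -- assembling
  have hf1cont : ContinuousOn (fun s : ℝ => u s ^ 2 / s ^ 2) (Ioi 0) :=
    (hucont.pow 2).div ((continuous_pow 2).continuousOn)
      (fun x hx => pow_ne_zero 2 (ne_of_gt hx))
  have hf2cont : ContinuousOn (fun s : ℝ => (deriv u s) ^ 2) (Ioi 0) := hducont.pow 2
  refine ⟨hcd, ?_, ?_⟩
  · have hp1 : IntegrableOn (fun s : ℝ => u s ^ 2 / s ^ 2) (Ioc 0 δ) := by
      apply Integrable.mono' (g := fun _ => ((Real.pi*b)⁻¹ * δ⁻¹)^2)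
        (integrableOn_const measure_Ioc_lt_top.ne)
        ((hf1cont.mono Ioc_subset_Ioi_self).aestronglyMeasurable measurableSet_Ioc)
      filter_upwards [ae_restrict_mem measurableSet_Ioc] with x hx
      have hx0 : 0 < x := hx.1
      have hb1 := hu_small x hx
      have h2 : u x^2 ≤ ((Real.pi*b)⁻¹ * δ⁻¹)^2 * x^2 := by
        rw [← sq_abs (u x)]
        calc |u x|^2 ≤ ((Real.pi*b)⁻¹ * δ⁻¹ * x)^2 := pow_le_pow_left₀ (abs_nonneg _) hb1 2
          _ = ((Real.pi*b)⁻¹ * δ⁻¹)^2 * x^2 := by ring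
      rw [Real.norm_eq_abs, abs_of_nonneg (by positivity), div_le_iff₀ (by positivity)]
      linarith
    have hsubIcc : Icc δ 1 ⊆ Ioi 0 := fun x hx => lt_of_lt_of_le hδpos hx.1
    have hp2 : IntegrableOn (fun s : ℝ => u s ^ 2 / s ^ 2) (Ioc δ 1) := by
      have h := (hf1cont.mono hsubIcc).integrableOn_Icc (μ := volume)
      exact h.mono_set Ioc_subset_Icc_self
    have hp3 : IntegrableOn (fun s : ℝ => u s ^ 2 / s ^ 2) (Ioi 1) := by
      apply Integrable.mono' (g := fun s => ((Real.pi*b)⁻¹)^2 * (s^2)⁻¹)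
        ((invsq_integrableOn one_pos).const_mul _)
        ((hf1cont.mono (Ioi_subset_Ioi zero_le_one)).aestronglyMeasurable measurableSet_Ioi)
      filter_upwards [ae_restrict_mem measurableSet_Ioi] with x hx
      have hx1 : (1:ℝ) < x := hx
      have hx0 : (0:ℝ) < x := lt_trans one_pos hx1
      have hb1 := hu_large x hx1
      have hxi : x⁻¹ ≤ 1 := by
        rw [inv_le_one_iff₀]
        right
        exact hx1.le
      have h1 : |u x| ≤ (Real.pi*b)⁻¹ :=
        le_trans hb1 (mul_le_of_le_one_right (by positivity) hxi)
      have h2 : u x^2 ≤ ((Real.pi*b)⁻¹)^2 := by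
        rw [← sq_abs (u x)]
        exact pow_le_pow_left₀ (abs_nonneg _) h1 2
      rw [Real.norm_eq_abs, abs_of_nonneg (by positivity), div_le_iff₀ (by positivity)]
      have h3 : ((Real.pi*b)⁻¹)^2 * (x^2)⁻¹ * x^2 = ((Real.pi*b)⁻¹)^2 := by
        field_simp
      rw [h3]
      exact h2
    have hIoc := hp1.union hp2
    rw [Ioc_union_Ioc_eq_Ioc hδpos.le hδle] at hIoc
    have hAll := hIoc.union hp3
    rwa [Ioc_union_Ioi_eq_Ioi zero_le_one] at hAll
  · have hq1 : IntegrableOn (fun s : ℝ => (deriv u s) ^ 2) (Ioc 0 δ) := by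
      apply Integrable.mono' (g := fun _ => (M * ((Real.pi*b)⁻¹ * δ⁻¹))^2)
        (integrableOn_const measure_Ioc_lt_top.ne)
        ((hf2cont.mono Ioc_subset_Ioi_self).aestronglyMeasurable measurableSet_Ioc)
      filter_upwards [ae_restrict_mem measurableSet_Ioc] with x hx
      have hx0 : 0 < x := hx.1
      have hb1 := hv_small x hx
      rw [hderiv_eq x hx0, Real.norm_eq_abs, abs_of_nonneg (by positivity), ← sq_abs (v x)]
      exact pow_le_pow_left₀ (abs_nonneg _) hb1 2
    have hsubIcc : Icc δ 1 ⊆ Ioi 0 := fun x hx => lt_of_lt_of_le hδpos hx.1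
    have hq2 : IntegrableOn (fun s : ℝ => (deriv u s) ^ 2) (Ioc δ 1) := by
      have h := (hf2cont.mono hsubIcc).integrableOn_Icc (μ := volume)
      exact h.mono_set Ioc_subset_Icc_self
    have hq3 : IntegrableOn (fun s : ℝ => (deriv u s) ^ 2) (Ioi 1) := by
      apply Integrable.mono' (g := fun s => (M * (Real.pi*b)⁻¹)^2 * (s^2)⁻¹)
        ((invsq_integrableOn one_pos).const_mul _)
        ((hf2cont.mono (Ioi_subset_Ioi zero_le_one)).aestronglyMeasurable measurableSet_Ioi)
      filter_upwards [ae_restrict_mem measurableSet_Ioi] with x hx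
      have hx1 : (1:ℝ) < x := hx
      have hx0 : (0:ℝ) < x := lt_trans one_pos hx1
      have hb1 := hv_large x hx1
      rw [hderiv_eq x hx0, Real.norm_eq_abs, abs_of_nonneg (by positivity), ← inv_pow,
        ← sq_abs (v x)]
      calc |v x|^2 ≤ (M * (Real.pi*b)⁻¹ * x⁻¹)^2 := pow_le_pow_left₀ (abs_nonneg _) hb1 2
        _ = (M * (Real.pi*b)⁻¹)^2 * (x⁻¹)^2 := by ring
    have hIoc := hq1.union hq2
    rw [Ioc_union_Ioc_eq_Ioc hδpos.le hδle] at hIoc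
    have hAll := hIoc.union hq3
    rwa [Ioc_union_Ioi_eq_Ioi zero_le_one] at hAll
end
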